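/- arXiv:2307.13324 — 7 statements merged into one kernel-verified Lean document; each statement's English description precedes it below -/
import Mathlib

section
/- Let A be an n×n complex matrix of the block form with first 2×2 block [[0, α₁₂],[α, 0]], first-row tail entries α₁₃,…,α₁ₙ; second-row tail zero; entries α₃₂,…,αₙ₂ in the second column below, zeros in the first column below, and lower-right (n−2)×(n−2) block Â. Let à be the (n−1)×(n−1) matrix with (1,1)-entry α·α₁₂, first row (α·α₁₃,…,α·α₁ₙ), first column (α₃₂,…,αₙ₂)ᵀ, and lower-right block Â. Then det(diag(x₁,…,xₙ) − A) = det(diag(x₁x₂, x₃,…,xₙ) − Ã) for all x₁,…,xₙ ∈ ℂ. -/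
/-!
Both determinants equal `x₁ x₂ · det D + α · det N`, where `D = diag(x₃,…,xₙ) − Â` and
`N = [[−α₁₂, −ρ], [−γ, D]]`. For the reduced matrix this is linearity of the determinant in its
first row, which is `x₁ x₂ e₁ + α · (first row of N)`. For the original matrix, expanding the
`x₁` entry leaves `x₁ x₂ · det D` plus the determinant of a matrix whose first column is `−α e₂`,
and that determinant is `α · det N`.
-/

open Matrix

namespace Matrix

variable {R : Type*} [CommRing R] {m ι : Type*} [DecidableEq m] [DecidableEq ι]

theorem diagonal_sum_elim_sub_fromBlocks (d : m → R) (e : ι → R) (A : Matrix m m R)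
    (B : Matrix m ι R) (C : Matrix ι m R) (D : Matrix ι ι R) :
    diagonal (Sum.elim d e) - fromBlocks A B C D =
      fromBlocks (diagonal d - A) (-B) (-C) (diagonal e - D) := by
  rw [← fromBlocks_diagonal, sub_eq_add_neg, fromBlocks_neg, fromBlocks_add]
  simp only [sub_eq_add_neg, zero_add]

variable [Fintype m] [Fintype ι]

theorem det_fromBlocks_unit (A : Matrix Unit Unit R) (B : Matrix Unit ι R) (C : Matrix ι Unit R)
    (D : Matrix ι ι R) :
    (fromBlocks A B C D).det = A () () * D.det + (fromBlocks 0 B C D).det := by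
  set M := fromBlocks (0 : Matrix Unit Unit R) B C D
  have hrow : fromBlocks A B C D =
      M.updateRow (.inl ()) (A () () • Pi.single (.inl ()) 1 + M (.inl ())) := by
    ext (i | i) (j | j) <;> simp [M, updateRow_apply]
  have hpivot : M.updateRow (.inl ()) (Pi.single (.inl ()) 1) = fromBlocks 1 0 C D := by
    ext (i | i) (j | j) <;> simp [M, updateRow_apply]
  rw [hrow, det_updateRow_add, det_updateRow_smul, updateRow_eq_self, hpivot,
    det_fromBlocks_zero₁₂, det_one, one_mul]

theorem det_fromBlocks_smul_top (c : R) (A : Matrix m m R) (B : Matrix m ι R) (C : Matrix ι m R)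
    (D : Matrix ι ι R) :
    (fromBlocks (c • A) (c • B) C D).det = c ^ Fintype.card m * (fromBlocks A B C D).det := by
  have : fromBlocks (c • A) (c • B) C D = fromBlocks (c • 1) 0 0 1 * fromBlocks A B C D := by
    simp [fromBlocks_multiply]
  rw [this, det_mul, det_fromBlocks_zero₁₂, det_smul, det_one, det_one, mul_one, mul_one]

theorem det_fromBlocks_zero_fromCols_fromRows (b c d : Matrix Unit Unit R) (B : Matrix Unit ι R)
    (C : Matrix ι Unit R) (D : Matrix ι ι R) :
    (fromBlocks 0 (fromCols b B) (fromRows c 0) (fromBlocks d 0 C D)).det =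
      -(c () () * (fromBlocks b B C D).det) := by
  set Z := fromBlocks 0 (fromCols b B) (fromRows c 0) (fromBlocks d 0 C D)
  set σ := Equiv.swap (Sum.inl () : Unit ⊕ (Unit ⊕ ι)) (.inr (.inl ()))
  have hswap : Z.submatrix σ id = fromBlocks c (fromCols d 0) 0 (fromBlocks b B C D) := by
    ext (i | i | i) (j | j | j) <;> simp [Z, σ, Equiv.swap_apply_def]
  have hperm := det_permute σ Z
  rw [hswap, det_fromBlocks_zero₂₁, det_unique, Equiv.Perm.sign_swap (by simp)] at hperm
  simp only [Units.val_neg, Units.val_one, Int.cast_neg, Int.cast_one, neg_mul, one_mul] at hperm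
  linear_combination hperm

end Matrix

variable {R : Type*} [CommRing R] {κ : Type*} [Fintype κ] [DecidableEq κ]

theorem det_diagonal_sub_fromBlocks_fin_two (α α₁₂ : R) (ρ γ : κ → R) (Ahat : Matrix κ κ R)
    (x₁ x₂ : R) (x : κ → R) :
    (diagonal (Sum.elim (fun i : Fin 2 => if i = 0 then x₁ else x₂) x) -
        fromBlocks
          (of (fun i j : Fin 2 =>
            if i = 0 ∧ j = 1 then α₁₂ else if i = 1 ∧ j = 0 then α else 0))
          (of (fun (i : Fin 2) (j : κ) => if i = 0 then ρ j else 0))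
          (of (fun (i : κ) (j : Fin 2) => if j = 1 then γ i else 0))
          Ahat).det =
      x₁ * x₂ * (diagonal x - Ahat).det +
        α * (fromBlocks (-of fun _ _ => α₁₂ : Matrix Unit Unit R) (-of fun _ => ρ)
          (-of fun i _ => γ i) (diagonal x - Ahat)).det := by
  -- `e` sends the two copies of `Unit` to `0` and `1`
  let e : Unit ⊕ (Unit ⊕ κ) ≃ Fin 2 ⊕ κ := (Equiv.sumAssoc Unit Unit κ).symm.trans
    (Equiv.sumCongr (Equiv.boolEquivPUnitSumPUnit.symm.trans finTwoEquiv.symm) (Equiv.refl κ))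
  rw [← det_submatrix_equiv_self e]
  calc _ = (fromBlocks (of fun _ _ => x₁) (fromCols (-of fun _ _ => α₁₂) (-of fun _ => ρ))
        (fromRows (of fun _ _ => -α) 0)
        (fromBlocks (of fun _ _ => x₂) 0 (-of fun i _ => γ i) (diagonal x - Ahat))).det := by
        congr 1
        ext (i | i | i) (j | j | j) <;>
          simp [e, Equiv.boolEquivPUnitSumPUnit, finTwoEquiv, diagonal_apply]
    _ = _ := by
        rw [det_fromBlocks_unit, det_fromBlocks_zero_fromCols_fromRows, det_fromBlocks_zero₁₂,
          det_unique]
        simp only [of_apply]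
        ring

theorem det_diagonal_sub_fromBlocks_unit (α α₁₂ : R) (ρ γ : κ → R) (Ahat : Matrix κ κ R)
    (x₁ x₂ : R) (x : κ → R) :
    (diagonal (Sum.elim (fun _ : Unit => x₁ * x₂) x) -
        fromBlocks
          (of (fun _ _ : Unit => α * α₁₂))
          (of (fun (_ : Unit) (j : κ) => α * ρ j))
          (of (fun (i : κ) (_ : Unit) => γ i))
          Ahat).det =
      x₁ * x₂ * (diagonal x - Ahat).det +
        α * (fromBlocks (-of fun _ _ => α₁₂ : Matrix Unit Unit R) (-of fun _ => ρ)
          (-of fun i _ => γ i) (diagonal x - Ahat)).det := by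
  have hrow : (-of fun (_ : Unit) j => α * ρ j) = α • -of fun _ => ρ := by
    ext; simp
  have hsmul : (fromBlocks 0 (α • -of fun (_ : Unit) => ρ) (-of fun i _ => γ i)
      (diagonal x - Ahat)).det =
      α * (fromBlocks 0 (-of fun (_ : Unit) => ρ) (-of fun i _ => γ i)
        (diagonal x - Ahat)).det := by
    simpa using det_fromBlocks_smul_top α 0 (-of fun (_ : Unit) => ρ) (-of fun i _ => γ i)
      (diagonal x - Ahat)
  rw [diagonal_sum_elim_sub_fromBlocks, det_fromBlocks_unit, det_fromBlocks_unit (-of _), hrow,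
    hsmul]
  simp only [Matrix.sub_apply, diagonal_apply_eq, of_apply, Matrix.neg_apply]
  ring

/-- Vertex-reduction determinant identity: let `A` be the block matrix with upper-left `2×2`
block `[[0, α₁₂], [α, 0]]`, first-row tail `(α₁₃,…,α₁ₙ)`, zero second-row tail, second-column
entries `(α₃₂,…,αₙ₂)` below, zero first column below, and lower-right block `Â`; let `Ã` be
the reduced matrix with `(1,1)`-entry `α·α₁₂`, first row `(α·α₁₃,…,α·α₁ₙ)`, first column
`(α₃₂,…,αₙ₂)ᵀ` and lower-right block `Â`.  Then
`det(diag(x₁,…,xₙ) − A) = det(diag(x₁x₂, x₃,…,xₙ) − Ã)`. -/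
theorem stmt7 {κ : Type} [Fintype κ] [DecidableEq κ]
    (α α₁₂ : ℂ) (ρ : κ → ℂ) (γ : κ → ℂ) (Ahat : Matrix κ κ ℂ)
    (x₁ x₂ : ℂ) (x : κ → ℂ) :
    (Matrix.diagonal (Sum.elim (fun i : Fin 2 => if i = 0 then x₁ else x₂) x) -
        Matrix.fromBlocks
          (Matrix.of (fun i j : Fin 2 =>
            if i = 0 ∧ j = 1 then α₁₂ else if i = 1 ∧ j = 0 then α else 0))
          (Matrix.of (fun (i : Fin 2) (j : κ) => if i = 0 then ρ j else 0))
          (Matrix.of (fun (i : κ) (j : Fin 2) => if j = 1 then γ i else 0))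
          Ahat).det =
      (Matrix.diagonal (Sum.elim (fun _ : Unit => x₁ * x₂) x) -
        Matrix.fromBlocks
          (Matrix.of (fun _ _ : Unit => α * α₁₂))
          (Matrix.of (fun (_ : Unit) (j : κ) => α * ρ j))
          (Matrix.of (fun (i : κ) (_ : Unit) => γ i))
          Ahat).det := by
  rw [det_diagonal_sub_fromBlocks_fin_two, det_diagonal_sub_fromBlocks_unit]
end

section
/- Let G be a finite metric graph with all edges of length l > 0, A a G-endomorphism with nonzero eigenvalues μ₁,…,μ_m, written uniquely as μ_j = exp(α_j + i φ_j) with α_j ∈ ℝ and φ_j ∈ [0,2π). Then λ ∈ ℂ is an eigenvalue of the Dirac operator D_{Γ(A)} if and only if e^{iλl} is a nonzero eigenvalue of A; equivalently the spectrum equals {(φ_j − i α_j + 2πk)/l : 1 ≤ j ≤ m, k ∈ ℤ}. -/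
open Complex

theorem Matrix.det_diagonal_const_sub_eq_zero_iff {n K : Type*} [Fintype n] [DecidableEq n]
    [Field K] (A : Matrix n n K) (z : K) :
    (Matrix.diagonal (fun _ : n => z) - A).det = 0 ↔ z ∈ spectrum K A := by
  rw [Matrix.mem_spectrum_iff_isRoot_charpoly, Polynomial.IsRoot, Matrix.eval_charpoly]
  rfl

theorem Complex.exp_I_mul_mul_eq_exp_iff {lam c : ℂ} (hc : c ≠ 0) (a b : ℂ) :
    exp (I * lam * c) = exp (a + I * b) ↔ ∃ k : ℤ, lam = (b - I * a + 2 * Real.pi * k) / c := by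
  rw [exp_eq_exp_iff_exists_int]
  refine exists_congr fun k => ?_
  rw [eq_div_iff hc]
  constructor <;> intro h
  · linear_combination (-I) * h + (lam * c - b - 2 * Real.pi * k) * I_sq
  · linear_combination I * h - a * I_sq

theorem stmt8_general {E : Type} [Fintype E] [DecidableEq E]
    (l : ℝ) (hl : 0 < l)
    (A : Matrix E E ℂ)
    (m : ℕ) (μ : Fin m → ℂ) (α φ : Fin m → ℝ)
    (hμ : ∀ j, μ j = Complex.exp (α j + Complex.I * φ j))
    (hspec : ∀ z : ℂ, (z ∈ spectrum ℂ A ∧ z ≠ 0) ↔ ∃ j, z = μ j) :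
    ∀ lam : ℂ,
      (Matrix.diagonal (fun _ : E => Complex.exp (Complex.I * lam * l)) - A).det = 0 ↔
        ∃ (j : Fin m) (k : ℤ),
          lam = ((φ j : ℂ) - Complex.I * (α j : ℂ) + 2 * Real.pi * k) / l := by
  intro lam
  have hl0 : (l : ℂ) ≠ 0 := by exact_mod_cast hl.ne'
  rw [Matrix.det_diagonal_const_sub_eq_zero_iff,
    ← and_iff_left (a := _ ∈ spectrum ℂ A) (exp_ne_zero (I * lam * l)), hspec]
  simp only [hμ, exp_I_mul_mul_eq_exp_iff hl0]

/-- Let `G` be a finite metric graph in which every edge has length `l > 0` and let `A` be a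
`G`-endomorphism (entry `A e e'` nonzero only if `e` starts where `e'` ends) whose nonzero
eigenvalues are `μ j = exp (α j + i φ j)` with `α j ∈ ℝ`, `φ j ∈ [0, 2π)`.  Then `λ ∈ ℂ` is an
eigenvalue of the Dirac operator `D_{Γ(A)}` — equivalently `det (e^{iλl}·Id − A) = 0`, i.e.
`e^{iλl}` is a (necessarily nonzero) eigenvalue of `A` — if and only if
`λ = (φ j − i α j + 2πk)/l` for some `j` and some `k ∈ ℤ`. -/
theorem stmt8 {V E : Type} [Fintype E] [DecidableEq E] (src dst : E → V)
    (l : ℝ) (hl : 0 < l)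
    (A : Matrix E E ℂ)
    (hGend : ∀ e e' : E, A e e' ≠ 0 → src e = dst e')
    (m : ℕ) (μ : Fin m → ℂ) (α φ : Fin m → ℝ)
    (hμ : ∀ j, μ j = Complex.exp (α j + Complex.I * φ j))
    (hφ : ∀ j, φ j ∈ Set.Ico (0:ℝ) (2 * Real.pi))
    (hμne : Function.Injective μ)
    (hspec : ∀ z : ℂ, (z ∈ spectrum ℂ A ∧ z ≠ 0) ↔ ∃ j, z = μ j) :
    ∀ lam : ℂ,
      (Matrix.diagonal (fun _ : E => Complex.exp (Complex.I * lam * l)) - A).det = 0 ↔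
        ∃ (j : Fin m) (k : ℤ),
          lam = ((φ j : ℂ) - Complex.I * (α j : ℂ) + 2 * Real.pi * k) / l :=
  stmt8_general l hl A m μ α φ hμ hspec
end

section
/- Let A be a block lower-triangular matrix decomposition: if a G-endomorphism A is reducible with respect to a proper nonempty edge subset Δ (A maps ℂ^Δ into itself), with A₁ the restriction to ℂ^Δ and A₂ the induced map on ℂ^{Δᶜ}, then for every λ ∈ ℂ, det(diag(exp(iλl)) − A) = det(diag(exp(iλl₁)) − A₁) · det(diag(exp(iλl₂)) − A₂), where l₁, l₂ are the restrictions of the length function. Consequently the spectrum of D_{Γ(A)} is the union of the spectra of the Dirac operators on the induced subgraphs with boundary conditions Γ(A₁) and Γ(A₂). -/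
/-! Invariance of `ℂ^Δ` under `A` makes `A`, and hence `diag(e^{iλl}) − A`, block triangular for
the splitting `E = Δ ⊔ Δᶜ`; its determinant is therefore the product of the determinants of the
two diagonal blocks, and the zero set of a product is the union of the zero sets. -/

namespace Matrix

variable {ι R : Type*} [DecidableEq ι]

theorem toSquareBlockProp_diagonal_sub [Zero R] [Sub R] (d : ι → R) (A : Matrix ι ι R)
    (p : ι → Prop) :
    (diagonal d - A).toSquareBlockProp p =
      diagonal (fun i : {i // p i} => d i) - A.submatrix Subtype.val Subtype.val := by
  rw [toSquareBlockProp, ← toBlock_diagonal_self]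
  rfl

theorem det_diagonal_sub_of_twoBlockTriangular [Fintype ι] [CommRing R] (d : ι → R)
    (A : Matrix ι ι R) (p : ι → Prop) [DecidablePred p] [Fintype {i // p i}]
    [Fintype {i // ¬p i}] (h : ∀ i, ¬p i → ∀ j, p j → A i j = 0) :
    (diagonal d - A).det =
      (diagonal (fun i : {i // p i} => d i) - A.submatrix Subtype.val Subtype.val).det *
        (diagonal (fun i : {i // ¬p i} => d i) - A.submatrix Subtype.val Subtype.val).det := by
  have h_block : ∀ i, ¬p i → ∀ j, p j → (diagonal d - A) i j = 0 := fun i hi j hj => by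
    rw [sub_apply, diagonal_apply_ne _ fun hij : i = j => hi (hij ▸ hj), h i hi j hj, sub_zero]
  rw [twoBlockTriangular_det _ p h_block, toSquareBlockProp_diagonal_sub,
    toSquareBlockProp_diagonal_sub]
  -- the two sides may carry different `Fintype` instances on the subtypes
  congr!

end Matrix

theorem stmt9_general {E : Type} [Fintype E] [DecidableEq E]
    (l : E → ℝ)
    (A : Matrix E E ℂ)
    (Δ : Finset E)
    (hred : ∀ e' ∈ Δ, ∀ e, e ∉ Δ → A e e' = 0) :
    (∀ lam : ℂ,
      (Matrix.diagonal (fun e : E => Complex.exp (Complex.I * lam * l e)) - A).det =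
        (Matrix.diagonal (fun e : {e : E // e ∈ Δ} => Complex.exp (Complex.I * lam * l e)) -
          A.submatrix Subtype.val Subtype.val).det *
        (Matrix.diagonal (fun e : {e : E // e ∉ Δ} => Complex.exp (Complex.I * lam * l e)) -
          A.submatrix Subtype.val Subtype.val).det) ∧
    {lam : ℂ |
        (Matrix.diagonal (fun e : E => Complex.exp (Complex.I * lam * l e)) - A).det = 0} =
      {lam : ℂ |
        (Matrix.diagonal (fun e : {e : E // e ∈ Δ} => Complex.exp (Complex.I * lam * l e)) -
          A.submatrix Subtype.val Subtype.val).det = 0} ∪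
      {lam : ℂ |
        (Matrix.diagonal (fun e : {e : E // e ∉ Δ} => Complex.exp (Complex.I * lam * l e)) -
          A.submatrix Subtype.val Subtype.val).det = 0} := by
  have h_factor := fun lam : ℂ =>
    Matrix.det_diagonal_sub_of_twoBlockTriangular
      (fun e => Complex.exp (Complex.I * lam * l e)) A (· ∈ Δ)
      fun e he e' he' => hred e' he' e he
  refine ⟨h_factor, Set.ext fun lam => ?_⟩
  simp only [Set.mem_ofPred_eq, Set.mem_union, h_factor lam, mul_eq_zero]

/-- If a `G`-endomorphism `A` on a finite metric graph is reducible with respect to a proper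
nonempty edge set `Δ` (i.e. `A` maps `ℂ^Δ` into itself), then its characteristic function
factors: `det(diag(e^{iλl}) − A) = det(diag(e^{iλl₁}) − A₁) · det(diag(e^{iλl₂}) − A₂)`, where
`A₁`, `A₂` are the restrictions of `A` to `ℂ^Δ` and `ℂ^{Δᶜ}`.  Consequently the spectrum of
`D_{Γ(A)}` (the zero set of the characteristic function) is the union of the spectra of the
Dirac operators on the two induced subgraphs with boundary conditions `Γ(A₁)`, `Γ(A₂)`. -/
theorem stmt9 {V E : Type} [Fintype E] [DecidableEq E] (src dst : E → V)
    (l : E → ℝ) (hl : ∀ e, 0 < l e)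
    (A : Matrix E E ℂ)
    (hGend : ∀ e e' : E, A e e' ≠ 0 → src e = dst e')
    (Δ : Finset E) (hne : Δ.Nonempty) (hproper : Δ ≠ Finset.univ)
    (hred : ∀ e' ∈ Δ, ∀ e, e ∉ Δ → A e e' = 0) :
    (∀ lam : ℂ,
      (Matrix.diagonal (fun e : E => Complex.exp (Complex.I * lam * l e)) - A).det =
        (Matrix.diagonal (fun e : {e : E // e ∈ Δ} => Complex.exp (Complex.I * lam * l e)) -
          A.submatrix Subtype.val Subtype.val).det *
        (Matrix.diagonal (fun e : {e : E // e ∉ Δ} => Complex.exp (Complex.I * lam * l e)) -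
          A.submatrix Subtype.val Subtype.val).det) ∧
    {lam : ℂ |
        (Matrix.diagonal (fun e : E => Complex.exp (Complex.I * lam * l e)) - A).det = 0} =
      {lam : ℂ |
        (Matrix.diagonal (fun e : {e : E // e ∈ Δ} => Complex.exp (Complex.I * lam * l e)) -
          A.submatrix Subtype.val Subtype.val).det = 0} ∪
      {lam : ℂ |
        (Matrix.diagonal (fun e : {e : E // e ∉ Δ} => Complex.exp (Complex.I * lam * l e)) -
          A.submatrix Subtype.val Subtype.val).det = 0} :=
  stmt9_general l A Δ hred
end

section
/- For the n×n cyclic matrix A with entries A_{j+1 mod n, j} = e^{iφ_j} and lengths l_j, each zero λ_k = (Σφ_j + 2πk)/L of the characteristic function e^{iλL} − e^{iΣφ_j} has dim ker(diag(e^{iλ_k l}) − A) = 1. -/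
/-!
The kernel equations of `diag(d) - A` for the weighted cycle `A` are the recurrence
`d (j + 1) * x (j + 1) = a j * x j` around the cycle. Since every `d j ≠ 0`, a kernel vector is
determined by `x 0`, so the kernel has dimension at most one; propagating `x 0 = 1` along the
cycle with partial products closes up consistently exactly when `∏ d = ∏ a`. For
`d j = e^{iλ lⱼ}` and `a j = e^{iφⱼ}` this is `e^{iλL} = e^{iΣφⱼ}`, which holds at every `λₖ`.
-/

theorem Fin.partialProd_last {M : Type*} [CommMonoid M] {m : ℕ} (f : Fin m → M) :
    Fin.partialProd f (Fin.last m) = ∏ i, f i := by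
  rw [Fin.partialProd, Fin.val_last, List.take_of_length_le (by simp), List.prod_ofFn]

namespace Matrix

variable {K : Type*} [Field K] {m : ℕ}

def weightedCycle (a : Fin (m + 1) → K) : Matrix (Fin (m + 1)) (Fin (m + 1)) K :=
  of fun i j => if i = j + 1 then a j else 0

theorem weightedCycle_mulVec_add_one (a x : Fin (m + 1) → K) (j : Fin (m + 1)) :
    (weightedCycle a *ᵥ x) (j + 1) = a j * x j := by
  simp [weightedCycle, mulVec, dotProduct]

theorem mem_ker_diagonal_sub_weightedCycle {d a x : Fin (m + 1) → K} :
    x ∈ LinearMap.ker (toLin' (diagonal d - weightedCycle a)) ↔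
      ∀ j, d (j + 1) * x (j + 1) = a j * x j := by
  rw [LinearMap.mem_ker, toLin'_apply, funext_iff, ← (Equiv.addRight 1).forall_congr_right]
  simp only [sub_mulVec, Pi.sub_apply, mulVec_diagonal, weightedCycle_mulVec_add_one,
    Pi.zero_apply, sub_eq_zero, Equiv.coe_addRight]

theorem eq_zero_of_mem_ker_diagonal_sub_weightedCycle {d a x : Fin (m + 1) → K}
    (hd : ∀ i, d i ≠ 0) (hx : x ∈ LinearMap.ker (toLin' (diagonal d - weightedCycle a)))
    (hx0 : x 0 = 0) : x = 0 := by
  funext i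
  simp only [Pi.zero_apply] at *
  induction i using Fin.induction with
  | zero => exact hx0
  | succ i ih =>
    have h := mem_ker_diagonal_sub_weightedCycle.1 hx i.castSucc
    rw [Fin.coeSucc_eq_succ, ih, mul_zero] at h
    exact (mul_eq_zero.1 h).resolve_left (hd _)

theorem finrank_ker_diagonal_sub_weightedCycle {d a : Fin (m + 1) → K} (hd : ∀ i, d i ≠ 0)
    (hprod : ∏ i, d i = ∏ i, a i) :
    Module.finrank K (LinearMap.ker (toLin' (diagonal d - weightedCycle a))) = 1 := by
  set v := Fin.partialProd fun i : Fin m => a i.castSucc / d i.succ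
  have hv : v ∈ LinearMap.ker (toLin' (diagonal d - weightedCycle a)) := by
    refine mem_ker_diagonal_sub_weightedCycle.2 fun j => ?_
    induction j using Fin.lastCases with
    | last =>
      have hD : ∏ i : Fin m, d i.succ ≠ 0 := Finset.prod_ne_zero_iff.2 fun i _ => hd _
      rw [Fin.prod_univ_succ, Fin.prod_univ_castSucc] at hprod
      simp only [v, Fin.last_add_one, Fin.partialProd_zero, Fin.partialProd_last,
        Finset.prod_div_distrib]
      field_simp
      linear_combination hprod
    | cast i =>
      simp only [v, Fin.coeSucc_eq_succ, Fin.partialProd_succ]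
      field_simp [hd i.succ]
  have hv0 : v 0 = 1 := Fin.partialProd_zero _
  refine (finrank_eq_one_iff_of_nonzero' ⟨v, hv⟩ fun h => ?_).2 fun w => ⟨w.1 0, ?_⟩
  · simpa [hv0] using congrArg (fun x => x.1 0) h
  · refine Subtype.ext (sub_eq_zero.1 (eq_zero_of_mem_ker_diagonal_sub_weightedCycle hd
      (sub_mem (Submodule.smul_mem _ _ hv) w.2) ?_))
    simp [hv0]

end Matrix

theorem stmt11_general (n : ℕ) [NeZero n] (φ : Fin n → ℝ)
    (l : Fin n → ℝ) (hl : ∀ j, 0 < l j) (k : ℤ) :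
    Module.finrank ℂ
      (LinearMap.ker (Matrix.toLin'
        (Matrix.diagonal (fun j : Fin n =>
            Complex.exp (Complex.I * ((((∑ i, φ i) + 2 * Real.pi * k) / (∑ i, l i) : ℝ) : ℂ)
              * (l j : ℂ))) -
          Matrix.of (fun i j : Fin n =>
            if i = j + 1 then Complex.exp (Complex.I * φ j) else 0)))) = 1 := by
  obtain ⟨m, rfl⟩ := Nat.exists_eq_add_one_of_ne_zero (NeZero.ne n)
  have hL : ((∑ i, l i : ℝ) : ℂ) ≠ 0 :=
    Complex.ofReal_ne_zero.2 (Finset.sum_pos (fun i _ => hl i) Finset.univ_nonempty).ne'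
  refine Matrix.finrank_ker_diagonal_sub_weightedCycle (fun _ => Complex.exp_ne_zero _) ?_
  rw [← Complex.exp_sum, ← Complex.exp_sum, ← Finset.mul_sum, ← Finset.mul_sum]
  calc _ = Complex.exp (Complex.I * ∑ i, (φ i : ℂ) + k * (2 * Real.pi * Complex.I)) := by
        congr 1
        push_cast at hL ⊢
        field_simp
    _ = _ := by rw [Complex.exp_add, Complex.exp_int_mul_two_pi_mul_I, mul_one]

/-- For the `n×n` cyclic matrix `A` with `A (j+1) j = e^{iφⱼ}` (indices mod `n`) and positive
edge lengths `lⱼ` with total length `L = Σ lⱼ`, each zero `λₖ = (Σφⱼ + 2πk)/L` of the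
characteristic function `e^{iλL} − e^{iΣφⱼ}` satisfies
`dim ker (diag(e^{iλₖ lⱼ}) − A) = 1`. -/
theorem stmt11 (n : ℕ) [NeZero n] (φ : Fin n → ℝ)
    (hφ : ∀ j, φ j ∈ Set.Ico (0:ℝ) (2 * Real.pi))
    (l : Fin n → ℝ) (hl : ∀ j, 0 < l j) (k : ℤ) :
    Module.finrank ℂ
      (LinearMap.ker (Matrix.toLin'
        (Matrix.diagonal (fun j : Fin n =>
            Complex.exp (Complex.I * ((((∑ i, φ i) + 2 * Real.pi * k) / (∑ i, l i) : ℝ) : ℂ)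
              * (l j : ℂ))) -
          Matrix.of (fun i j : Fin n =>
            if i = j + 1 then Complex.exp (Complex.I * φ j) else 0)))) = 1 :=
  stmt11_general n φ l hl k
end

section
/- Let P be a G-permutation of a finite metric Eulerian digraph G whose trail decomposition consists of closed trails T₁,…,T_m with total lengths L₁,…,L_m. Then the spectrum of the Dirac operator D_{Γ(P)} equals {2πk/L_i : i ∈ {1,…,m}, k ∈ ℤ}, and the multiplicity of 0 is m, while for λ ≠ 0 the multiplicity of λ equals the number of indices i such that λ·L_i ∈ 2πℤ. -/
/-!
A vector `x` lies in the kernel of `diag(d) − P` iff `x e = d (P e) * x (P e)` for every edge `e`.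
Going once around the trail through `e` gives `x e = (∏_{trail} d) * x e`, so `x` vanishes on
every trail whose product `∏ d` differs from `1`, while on a trail of product `1` it is
determined by its value at one edge, and that value can be prescribed freely. Hence the kernel
has one dimension per trail of product `1`; for `d e = exp(iλ l e)` the product over `Tᵢ` is
`exp(iλ Lᵢ)`.
-/

open scoped BigOperators

/-- The setoid on edges whose classes are the orbits (trails) of a permutation. -/
def sameCycleSetoid {E : Type} (P : Equiv.Perm E) : Setoid E :=
  ⟨P.SameCycle, ⟨fun x => Equiv.Perm.SameCycle.refl P x, fun h => h.symm, fun h h' => h.trans h'⟩⟩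

/-- The total length of the closed trail (orbit of `P`) through the edge `e`. -/
noncomputable def trailLen {E : Type} (l : E → ℝ) (P : Equiv.Perm E) (e : E) : ℝ :=
  ∑ i ∈ Finset.range (Function.minimalPeriod (⇑P) e), l ((⇑P)^[i] e)

open Function Finset
open scoped Matrix

theorem Finset.prod_range_rotate {M : Type*} [CommMonoid M] {f : ℕ → M} {n : ℕ}
    (h : f n = f 0) : ∏ i ∈ range n, f (i + 1) = ∏ i ∈ range n, f i := by
  cases n with
  | zero => rfl
  | succ m => rw [prod_range_succ, prod_range_succ' f, h]

theorem Equiv.Perm.SameCycle.exists_iterate_lt_minimalPeriod {E : Type} [Finite E]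
    {P : Equiv.Perm E} {r e : E} (h : P.SameCycle r e) :
    ∃ j < minimalPeriod P r, P^[j] r = e := by
  obtain ⟨i, hi⟩ := h.exists_nat_pow_eq
  refine ⟨i % minimalPeriod P r, Nat.mod_lt _
    (minimalPeriod_pos_of_mem_periodicPts (P.injective.mem_periodicPts r)), ?_⟩
  rw [iterate_mod_minimalPeriod_eq, Equiv.Perm.iterate_eq_pow, hi]

section CycleProd

variable {M : Type*} [CommMonoid M] {E : Type} (d : E → M) (P : Equiv.Perm E)

noncomputable def cycleProd (e : E) : M := ∏ i ∈ range (minimalPeriod P e), d (P^[i] e)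

def IsTwistedInvariant (x : E → M) : Prop := ∀ e, d (P e) * x (P e) = x e

theorem cycleProd_eq_prod_iterate_succ (e : E) :
    cycleProd d P e = ∏ i ∈ range (minimalPeriod P e), d (P^[i + 1] e) :=
  (prod_range_rotate (f := fun i => d (P^[i] e))
    (by simp only [iterate_minimalPeriod, iterate_zero_apply])).symm

variable {x : E → M}

theorem apply_eq_prod_mul_apply_iterate (hx : IsTwistedInvariant d P x) (n : ℕ) (e : E) :
    x e = (∏ i ∈ range n, d (P^[i + 1] e)) * x (P^[n] e) := by
  induction n with
  | zero => simp
  | succ n ih => rw [ih, ← hx (P^[n] e), prod_range_succ, iterate_succ_apply', mul_assoc]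

theorem apply_eq_cycleProd_mul_apply (hx : IsTwistedInvariant d P x) (e : E) :
    x e = cycleProd d P e * x e := by
  have h := apply_eq_prod_mul_apply_iterate d P hx (minimalPeriod P e) e
  rwa [iterate_minimalPeriod, ← cycleProd_eq_prod_iterate_succ] at h

end CycleProd

section Vanishing

variable {M₀ : Type*} [CommMonoidWithZero M₀] {E : Type} (d : E → M₀)
  (P : Equiv.Perm E) {x : E → M₀}

theorem apply_eq_zero_of_cycleProd_ne_one [IsRightCancelMulZero M₀]
    (hx : IsTwistedInvariant d P x) {e : E} (he : cycleProd d P e ≠ 1) : x e = 0 :=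
  (mul_left_eq_self₀.1 (apply_eq_cycleProd_mul_apply d P hx e).symm).resolve_left he

theorem apply_eq_zero_of_sameCycle [Finite E] (hx : IsTwistedInvariant d P x) {e r : E}
    (h : P.SameCycle e r) (hr : x r = 0) : x e = 0 := by
  obtain ⟨i, hi⟩ := h.exists_nat_pow_eq
  rw [apply_eq_prod_mul_apply_iterate d P hx i e, Equiv.Perm.iterate_eq_pow, hi, hr, mul_zero]

theorem eq_zero_of_apply_out_eq_zero [IsRightCancelMulZero M₀] [Finite E]
    (hx : IsTwistedInvariant d P x)
    (h : ∀ t : Quotient (sameCycleSetoid P), cycleProd d P t.out = 1 → x t.out = 0) :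
    x = 0 := by
  funext e
  have hr : x (⟦e⟧ : Quotient (sameCycleSetoid P)).out = 0 := by
    by_cases hc : cycleProd d P (⟦e⟧ : Quotient (sameCycleSetoid P)).out = 1
    · exact h _ hc
    · exact apply_eq_zero_of_cycleProd_ne_one d P hx hc
  exact apply_eq_zero_of_sameCycle d P hx (Quotient.mk_out (s := sameCycleSetoid P) e).symm hr

end Vanishing

section OrbitVec

variable {R : Type*} [CommSemiring R] {E : Type} [DecidableEq E] (d : E → R) (P : Equiv.Perm E)

/-- At `P^[j] r` only the `j`-th summand survives, as `j ↦ P^[j] r` is injective below the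
minimal period; off the trail of `r` every summand vanishes. -/
noncomputable def orbitVec (r : E) : E → R := fun e =>
  ∑ j ∈ range (minimalPeriod P r),
    if P^[j] r = e then ∏ i ∈ Ico j (minimalPeriod P r), d (P^[i + 1] r) else 0

theorem orbitVec_iterate {r : E} {j : ℕ} (hj : j < minimalPeriod P r) :
    orbitVec d P r (P^[j] r) = ∏ i ∈ Ico j (minimalPeriod P r), d (P^[i + 1] r) := by
  rw [orbitVec, sum_eq_single_of_mem j (mem_range.2 hj)]
  · exact if_pos rfl
  · exact fun i hi hij =>
      if_neg fun h => hij (iterate_injOn_Iio_minimalPeriod (mem_range.1 hi) hj h)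

variable {P} in
theorem orbitVec_iterate_of_le [Finite E] {r : E} (hr : cycleProd d P r = 1) {j : ℕ}
    (hj : j ≤ minimalPeriod P r) :
    orbitVec d P r (P^[j] r) = ∏ i ∈ Ico j (minimalPeriod P r), d (P^[i + 1] r) := by
  rcases hj.lt_or_eq with hj | rfl
  · exact orbitVec_iterate d P hj
  · have hpos := minimalPeriod_pos_of_mem_periodicPts (P.injective.mem_periodicPts r)
    have h0 := orbitVec_iterate d P hpos
    rw [iterate_zero_apply, ← range_eq_Ico, ← cycleProd_eq_prod_iterate_succ, hr] at h0
    rw [iterate_minimalPeriod, h0, Ico_self, prod_empty]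

variable {P} in
theorem orbitVec_self [Finite E] {r : E} (hr : cycleProd d P r = 1) : orbitVec d P r r = 1 := by
  simpa using orbitVec_iterate_of_le d hr (minimalPeriod P r).le_refl

variable {P} in
theorem orbitVec_of_not_sameCycle {r e : E} (h : ¬ P.SameCycle r e) : orbitVec d P r e = 0 :=
  sum_eq_zero fun j _ =>
    if_neg fun hj => h ⟨(j : ℤ), by rw [zpow_natCast, ← Equiv.Perm.iterate_eq_pow, hj]⟩

variable {P} in
theorem isTwistedInvariant_orbitVec [Finite E] {r : E} (hr : cycleProd d P r = 1) (e : E) :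
    d (P e) * orbitVec d P r (P e) = orbitVec d P r e := by
  by_cases h : P.SameCycle r e
  · obtain ⟨j, hj, rfl⟩ := h.exists_iterate_lt_minimalPeriod
    rw [← iterate_succ_apply' P, orbitVec_iterate_of_le d hr hj,
      orbitVec_iterate_of_le d hr hj.le, prod_eq_prod_Ico_succ_bot hj]
  · have h' : ¬ P.SameCycle r (P e) := by rwa [Equiv.Perm.sameCycle_apply_right]
    rw [orbitVec_of_not_sameCycle d h, orbitVec_of_not_sameCycle d h', mul_zero]

theorem orbitVec_out_apply_out_of_ne {t t' : Quotient (sameCycleSetoid P)} (h : t ≠ t') :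
    orbitVec d P t.out t'.out = 0 :=
  orbitVec_of_not_sameCycle d fun hc => h (Quotient.out_equiv_out.1 hc)

end OrbitVec

section DiagSubPerm

variable {K : Type*} [Field K] {E : Type} [Fintype E] [DecidableEq E] (d : E → K)
  (P : Equiv.Perm E)

def diagSubPerm : Matrix E E K :=
  Matrix.diagonal d - Matrix.of fun e e' => if e = P e' then 1 else 0

theorem diagSubPerm_mulVec_apply (x : E → K) (e : E) :
    (diagSubPerm d P *ᵥ x) e = d e * x e - x (P.symm e) := by
  have hP : ∀ e', (e = P e') ↔ (e' = P.symm e) := fun e' => by rw [eq_comm, Equiv.eq_symm_apply]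
  simp [diagSubPerm, Matrix.mulVec, dotProduct, hP, sub_mul, sum_sub_distrib, Matrix.diagonal_apply]

theorem diagSubPerm_mulVec_eq_zero_iff (x : E → K) :
    diagSubPerm d P *ᵥ x = 0 ↔ IsTwistedInvariant d P x := by
  simp only [funext_iff, diagSubPerm_mulVec_apply, Pi.zero_apply, sub_eq_zero]
  exact ⟨fun h e => by simpa using h (P e), fun h e => by simpa using h (P.symm e)⟩

theorem mem_ker_toLin'_diagSubPerm_iff (x : E → K) :
    x ∈ LinearMap.ker (Matrix.toLin' (diagSubPerm d P)) ↔ IsTwistedInvariant d P x := by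
  rw [LinearMap.mem_ker, Matrix.toLin'_apply, diagSubPerm_mulVec_eq_zero_iff]

theorem det_diagSubPerm_eq_zero_iff : (diagSubPerm d P).det = 0 ↔ ∃ e, cycleProd d P e = 1 := by
  rw [← Matrix.exists_mulVec_eq_zero_iff]
  constructor
  · rintro ⟨x, hx0, hx⟩
    obtain ⟨e, he⟩ := Function.ne_iff.1 hx0
    exact ⟨e, not_not.1 fun hc =>
      he (apply_eq_zero_of_cycleProd_ne_one d P ((diagSubPerm_mulVec_eq_zero_iff d P x).1 hx) hc)⟩
  · rintro ⟨e, he⟩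
    refine ⟨orbitVec d P e, fun h => one_ne_zero (α := K) ?_,
      (diagSubPerm_mulVec_eq_zero_iff d P _).2 (isTwistedInvariant_orbitVec d he)⟩
    rw [← orbitVec_self d he, h, Pi.zero_apply]

theorem finrank_ker_toLin'_diagSubPerm :
    Module.finrank K (LinearMap.ker (Matrix.toLin' (diagSubPerm d P))) =
      Nat.card {t : Quotient (sameCycleSetoid P) // cycleProd d P t.out = 1} := by
  classical
  let S := {t : Quotient (sameCycleSetoid P) // cycleProd d P t.out = 1}
  let ker := LinearMap.ker (Matrix.toLin' (diagSubPerm d P))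
  let F : ker →ₗ[K] S → K :=
    (LinearMap.pi fun t : S => LinearMap.proj t.1.out) ∘ₗ ker.subtype
  have hinj : Injective F := by
    refine (injective_iff_map_eq_zero F).2 fun x hx => Subtype.ext ?_
    exact eq_zero_of_apply_out_eq_zero d P ((mem_ker_toLin'_diagSubPerm_iff d P x).1 x.2)
      fun t ht => congrFun hx ⟨t, ht⟩
  have hsurj : Surjective F := by
    intro f
    have hmem : ∑ t : S, f t • orbitVec d P t.1.out ∈ ker :=
      Submodule.sum_mem _ fun t _ => Submodule.smul_mem _ _
        ((mem_ker_toLin'_diagSubPerm_iff d P _).2 (isTwistedInvariant_orbitVec d t.2))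
    refine ⟨⟨_, hmem⟩, funext fun t' => ?_⟩
    change (∑ t : S, f t • orbitVec d P t.1.out) t'.1.out = f t'
    simp only [Finset.sum_apply, Pi.smul_apply, smul_eq_mul]
    rw [Fintype.sum_eq_single t' fun t ht =>
      by rw [orbitVec_out_apply_out_of_ne d P (Subtype.coe_ne_coe.2 ht), mul_zero],
      orbitVec_self d t'.2, mul_one]
  rw [(LinearEquiv.ofBijective F ⟨hinj, hsurj⟩).finrank_eq, Module.finrank_pi,
    Nat.card_eq_fintype_card]

end DiagSubPerm

theorem Complex.exp_I_mul_mul_ofReal_eq_one_iff (lam : ℂ) (L : ℝ) :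
    Complex.exp (Complex.I * lam * L) = 1 ↔ ∃ k : ℤ, lam * L = 2 * Real.pi * k := by
  rw [Complex.exp_eq_one_iff]
  refine exists_congr fun k => ⟨fun h => mul_left_cancel₀ Complex.I_ne_zero ?_, fun h => ?_⟩
  · linear_combination h
  · linear_combination Complex.I * h

section Trails

variable {E : Type} (l : E → ℝ) (P : Equiv.Perm E)

theorem cycleProd_exp (lam : ℂ) (e : E) :
    cycleProd (fun e => Complex.exp (Complex.I * lam * l e)) P e =
      Complex.exp (Complex.I * lam * trailLen l P e) := by
  rw [cycleProd, trailLen, ← Complex.exp_sum, Complex.ofReal_sum, mul_sum]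

theorem trailLen_pos [Finite E] (hl : ∀ e, 0 < l e) (e : E) : 0 < trailLen l P e :=
  sum_pos (fun _ _ => hl _) (nonempty_range_iff.2
    (minimalPeriod_pos_of_mem_periodicPts (P.injective.mem_periodicPts e)).ne')

variable [Fintype E] [DecidableEq E]

theorem det_diagSubPerm_exp_eq_zero_iff (hl : ∀ e, 0 < l e) (lam : ℂ) :
    (diagSubPerm (fun e => Complex.exp (Complex.I * lam * l e)) P).det = 0 ↔
      ∃ (e : E) (k : ℤ), lam = (2 * Real.pi * k / trailLen l P e : ℝ) := by
  refine (det_diagSubPerm_eq_zero_iff _ P).trans (exists_congr fun e => ?_)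
  have hL : (trailLen l P e : ℂ) ≠ 0 := Complex.ofReal_ne_zero.2 (trailLen_pos l P hl e).ne'
  rw [cycleProd_exp, Complex.exp_I_mul_mul_ofReal_eq_one_iff]
  push_cast
  simp only [eq_div_iff hL]

theorem finrank_ker_toLin'_diagSubPerm_exp (lam : ℂ) :
    Module.finrank ℂ
        (LinearMap.ker (Matrix.toLin'
          (diagSubPerm (fun e => Complex.exp (Complex.I * lam * l e)) P))) =
      Nat.card {t : Quotient (sameCycleSetoid P) //
        ∃ k : ℤ, lam * (trailLen l P t.out : ℂ) = 2 * Real.pi * k} :=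
  (finrank_ker_toLin'_diagSubPerm _ P).trans <| Nat.card_congr <| Equiv.subtypeEquivRight
    fun t => by rw [cycleProd_exp, Complex.exp_I_mul_mul_ofReal_eq_one_iff]

end Trails

theorem stmt15_general {E : Type} [Fintype E] [DecidableEq E]
    (l : E → ℝ) (hl : ∀ e, 0 < l e)
    (P : Equiv.Perm E) :
    ({lam : ℂ |
        (Matrix.diagonal (fun e : E => Complex.exp (Complex.I * lam * l e)) -
          Matrix.of (fun e e' : E => if e = P e' then (1 : ℂ) else 0)).det = 0} =
      {lam : ℂ | ∃ (e : E) (k : ℤ), lam = (2 * Real.pi * k / trailLen l P e : ℝ)}) ∧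
    (Module.finrank ℂ
        (LinearMap.ker (Matrix.toLin'
          (Matrix.diagonal (fun e : E => Complex.exp (Complex.I * (0:ℂ) * l e)) -
            Matrix.of (fun e e' : E => if e = P e' then (1 : ℂ) else 0)))) =
      Nat.card (Quotient (sameCycleSetoid P))) ∧
    (∀ lam : ℂ, lam ≠ 0 →
      Module.finrank ℂ
          (LinearMap.ker (Matrix.toLin'
            (Matrix.diagonal (fun e : E => Complex.exp (Complex.I * lam * l e)) -
              Matrix.of (fun e e' : E => if e = P e' then (1 : ℂ) else 0)))) =
        Nat.card {t : Quotient (sameCycleSetoid P) //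
          ∃ k : ℤ, lam * (trailLen l P (Quotient.out t) : ℂ) = 2 * Real.pi * k}) :=
  ⟨Set.ext (det_diagSubPerm_exp_eq_zero_iff l P hl),
    (finrank_ker_toLin'_diagSubPerm_exp l P 0).trans
      (Nat.card_congr (Equiv.subtypeUnivEquiv fun _ => ⟨0, by simp⟩)),
    fun lam _ => finrank_ker_toLin'_diagSubPerm_exp l P lam⟩

/-- For a `G`-permutation `P` of a finite metric Eulerian digraph, with trail decomposition
`T₁,…,T_m` of total lengths `L₁,…,L_m`: the spectrum of `D_{Γ(P)}` (the zero set of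
`λ ↦ det(diag(e^{iλl}) − P)`) equals `{2πk/Lᵢ}`; the multiplicity of `0` (the kernel dimension
of `diag(e^{iλl}) − P` at `λ = 0`) is the number `m` of trails; and for `λ ≠ 0` the
multiplicity equals the number of trails with `λ·Lᵢ ∈ 2πℤ`. -/
theorem stmt15 {V E : Type} [Fintype E] [DecidableEq E] (src dst : E → V)
    (l : E → ℝ) (hl : ∀ e, 0 < l e)
    (P : Equiv.Perm E) (hP : ∀ e, dst e = src (P e)) :
    ({lam : ℂ |
        (Matrix.diagonal (fun e : E => Complex.exp (Complex.I * lam * l e)) -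
          Matrix.of (fun e e' : E => if e = P e' then (1 : ℂ) else 0)).det = 0} =
      {lam : ℂ | ∃ (e : E) (k : ℤ), lam = (2 * Real.pi * k / trailLen l P e : ℝ)}) ∧
    (Module.finrank ℂ
        (LinearMap.ker (Matrix.toLin'
          (Matrix.diagonal (fun e : E => Complex.exp (Complex.I * (0:ℂ) * l e)) -
            Matrix.of (fun e e' : E => if e = P e' then (1 : ℂ) else 0)))) =
      Nat.card (Quotient (sameCycleSetoid P))) ∧
    (∀ lam : ℂ, lam ≠ 0 →
      Module.finrank ℂ
          (LinearMap.ker (Matrix.toLin'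
            (Matrix.diagonal (fun e : E => Complex.exp (Complex.I * lam * l e)) -
              Matrix.of (fun e e' : E => if e = P e' then (1 : ℂ) else 0)))) =
        Nat.card {t : Quotient (sameCycleSetoid P) //
          ∃ k : ℤ, lam * (trailLen l P (Quotient.out t) : ℂ) = 2 * Real.pi * k}) :=
  stmt15_general l hl P
end

section
/- Let G be a finite digraph without isolated vertices and 𝒜(G) its directed edge-adjacency matrix, indexed by edges, with entry (e, e′) equal to 1 if head(e′) = tail(e) and 0 otherwise. Then 𝒜(G) is non-singular if and only if G is a disjoint union of directed cycles, in which case det 𝒜(G) = (−1)^{α(G) − η(G)}, where α(G) is the number of cycles (connected components) and η(G) the number of edges. -/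
/-
Expanding `det 𝒜(G)` over permutations `σ` of the edges, the term of `σ` is `sign σ` if every
edge `e` ends where `σ e` starts, and `0` otherwise. If two edges share a tail, `𝒜(G)` has two
equal rows; otherwise at most one `σ` qualifies, and a qualifying `σ` is exactly a decomposition
of `G` into disjoint directed cycles, whose orbits are the cycles of `G`. Finally each orbit of
size `k` contributes `(-1)^(k-1)` to `sign σ`.
-/

/-- A permutation `P` of the edges exhibiting the digraph as a disjoint union of directed
cycles. -/
def IsDisjointCycles {V E : Type} (src dst : E → V) (P : Equiv.Perm E) : Prop :=
  (∀ e, dst e = src (P e)) ∧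
  (∀ e : E, ∀ i j : ℕ, i < Function.minimalPeriod (⇑P) e → j < Function.minimalPeriod (⇑P) e →
    src ((⇑P)^[i] e) = src ((⇑P)^[j] e) → i = j) ∧
  (∀ e e' : E, (src e = src e' ∨ src e = dst e' ∨ dst e = src e' ∨ dst e = dst e') →
    P.SameCycle e e')

/-- The directed edge-adjacency matrix: entry `(e, e')` is `1` iff `e'` ends where `e`
starts. -/
def adjMat {V E : Type} [DecidableEq V] [Fintype E] (src dst : E → V) : Matrix E E ℂ :=
  Matrix.of fun e e' : E => if dst e' = src e then (1 : ℂ) else 0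

open Equiv Function Finset

namespace Equiv.Perm

variable {α : Type*}

theorem SameCycle.exists_iterate_lt_minimalPeriod_s17 [Finite α] {f : Perm α} {x y : α}
    (h : f.SameCycle x y) : ∃ i < minimalPeriod f x, f^[i] x = y := by
  have hx : x ∈ periodicPts f := by
    rw [injective_iff_periodicPts_eq_univ.mp f.injective]
    trivial
  obtain ⟨i, -, rfl⟩ := h.exists_pow_eq'
  refine ⟨i % minimalPeriod f x, Nat.mod_lt _ (minimalPeriod_pos_of_mem_periodicPts hx), ?_⟩
  rw [iterate_mod_minimalPeriod_eq, coe_pow]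

variable [Fintype α] [DecidableEq α]

def cycleLabel (σ : Perm α) (x : α) : fixedPoints σ ⊕ σ.cycleFactorsFinset :=
  if h : σ x = x then .inl ⟨x, h⟩
  else .inr ⟨σ.cycleOf x, cycleOf_mem_cycleFactorsFinset_iff.mpr (mem_support.mpr h)⟩

theorem cycleLabel_eq_iff {σ : Perm α} {x y : α} :
    σ.cycleLabel x = σ.cycleLabel y ↔ σ.SameCycle x y := by
  by_cases hx : σ x = x <;> by_cases hy : σ y = y <;> simp only [cycleLabel, hx, hy, dite_true,
    dite_false, reduceCtorEq, false_iff, Sum.inl.injEq, Sum.inr.injEq, Subtype.mk.injEq]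
  · refine ⟨fun h => ?_, fun h => Subtype.ext (h.eq_of_left hx)⟩
    obtain rfl : x = y := congrArg Subtype.val h
    rfl
  · exact fun h => hy (h.apply_eq_self_iff.mp hx)
  · exact fun h => hx (h.apply_eq_self_iff.mpr hy)
  · exact (sameCycle_iff_cycleOf_eq_of_mem_support (mem_support.mpr hx)
      (mem_support.mpr hy)).symm

theorem cycleLabel_surjective (σ : Perm α) : Surjective σ.cycleLabel := by
  rintro (⟨x, hx⟩ | ⟨c, hc⟩)
  · exact ⟨x, dif_pos hx⟩
  · obtain ⟨x, hx⟩ := (mem_cycleFactorsFinset_iff.mp hc).1.nonempty_support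
    have hσx : σ x ≠ x := by
      rw [← (mem_cycleFactorsFinset_iff.mp hc).2 x hx]
      exact mem_support.mp hx
    exact ⟨x, by simp only [cycleLabel, hσx, dite_false, cycle_is_cycleOf hx hc]⟩

theorem card_quotient_sameCycle (σ : Perm α) :
    Nat.card (Quotient (SameCycle.setoid σ)) =
      Fintype.card (fixedPoints σ) + #σ.cycleFactorsFinset := by
  have hker : SameCycle.setoid σ = Setoid.ker σ.cycleLabel :=
    Setoid.ext fun _ _ => cycleLabel_eq_iff.symm
  rw [hker, Nat.card_congr (Setoid.quotientKerEquivOfSurjective _ σ.cycleLabel_surjective),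
    Nat.card_sum, Nat.card_eq_fintype_card, Nat.card_eq_fintype_card, Fintype.card_coe]

theorem sign_eq_neg_one_pow_card_sub_card_quotient (σ : Perm α) :
    sign σ = (-1 : ℤˣ) ^ (Fintype.card α - Nat.card (Quotient (SameCycle.setoid σ))) := by
  have hk : #σ.cycleFactorsFinset = Multiset.card σ.cycleType := by
    rw [cycleType_def, Multiset.card_map]; rfl
  have hk_le : Multiset.card σ.cycleType * 2 ≤ σ.cycleType.sum := by
    simpa using Multiset.card_nsmul_le_sum (s := σ.cycleType) (a := 2)
      (fun _ hn => two_le_of_mem_cycleType hn)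
  have hsum_le := σ.sum_cycleType_le
  rw [card_quotient_sameCycle, card_fixedPoints, hk, sign_of_cycleType]
  have hexp : σ.cycleType.sum + Multiset.card σ.cycleType =
      (Fintype.card α - (Fintype.card α - σ.cycleType.sum + Multiset.card σ.cycleType)) +
        2 * Multiset.card σ.cycleType := by
    omega
  rw [hexp, pow_add, pow_mul, Int.units_sq, one_pow, mul_one]

end Equiv.Perm

section EdgeAdjacency

variable {V E : Type} {src dst : E → V}

theorem isDisjointCycles_of_injective (hsrc : Injective src) {σ : Perm E}
    (hσ : ∀ e, dst e = src (σ e)) : IsDisjointCycles src dst σ := by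
  refine ⟨hσ, fun e i j hi hj h => iterate_injOn_Iio_minimalPeriod hi hj (hsrc h),
    fun e e' h => ?_⟩
  have key : ∀ {a b}, σ.SameCycle e a → σ.SameCycle e' b → src a = src b → σ.SameCycle e e' :=
    fun ha hb hab => (hsrc hab ▸ ha).trans hb.symm
  simp only [hσ] at h
  rcases h with h | h | h | h
  · exact key .rfl .rfl h
  · exact key .rfl (Perm.sameCycle_apply_right.mpr .rfl) h
  · exact key (Perm.sameCycle_apply_right.mpr .rfl) .rfl h
  · exact key (Perm.sameCycle_apply_right.mpr .rfl) (Perm.sameCycle_apply_right.mpr .rfl) h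

theorem IsDisjointCycles.injective_src [Finite E] {P : Perm E}
    (hP : IsDisjointCycles src dst P) : Injective src := by
  obtain ⟨-, hsrc, hconn⟩ := hP
  intro a b hab
  obtain ⟨i, hi, rfl⟩ := (hconn a b (.inl hab)).exists_iterate_lt_minimalPeriod_s17
  rw [← hsrc a 0 i (Nat.zero_lt_of_lt hi) hi hab, iterate_zero_apply]

variable [DecidableEq V] [Fintype E] [DecidableEq E]

theorem det_adjMat :
    (adjMat src dst).det =
      ∑ σ : Perm E, if ∀ e, dst e = src (σ e) then ((Perm.sign σ : ℤ) : ℂ) else 0 := by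
  rw [Matrix.det_apply]
  refine sum_congr rfl fun σ _ => ?_
  split_ifs with h
  · simp [adjMat, h, Units.smul_def]
  · obtain ⟨e, he⟩ := not_forall.mp h
    rw [prod_eq_zero (mem_univ e) (by simp [adjMat, he]), smul_zero]

theorem det_adjMat_eq_zero_of_not_injective (h : ¬Injective src) : (adjMat src dst).det = 0 := by
  obtain ⟨a, b, hab, hne⟩ := not_injective_iff.mp h
  exact Matrix.det_zero_of_row_eq hne (by ext; simp [adjMat, hab])

theorem exists_perm_of_det_adjMat_ne_zero (h : (adjMat src dst).det ≠ 0) :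
    ∃ σ : Perm E, ∀ e, dst e = src (σ e) := by
  contrapose! h
  rw [det_adjMat]
  exact sum_eq_zero fun σ _ => if_neg (not_forall.mpr (h σ))

theorem det_adjMat_of_injective (hsrc : Injective src) {P : Perm E}
    (hP : ∀ e, dst e = src (P e)) : (adjMat src dst).det = ((Perm.sign P : ℤ) : ℂ) := by
  rw [det_adjMat, sum_eq_single P (fun σ _ hσP => if_neg fun hσ => hσP <|
    Perm.ext fun e => hsrc ((hσ e).symm.trans (hP e))) (by simp), if_pos hP]

theorem IsDisjointCycles.det_adjMat {P : Perm E} (hP : IsDisjointCycles src dst P) :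
    (adjMat src dst).det = ((Perm.sign P : ℤ) : ℂ) :=
  det_adjMat_of_injective hP.injective_src hP.1

end EdgeAdjacency

theorem stmt17_general {V E : Type} [Fintype E] [DecidableEq V] [DecidableEq E]
    (src dst : E → V) :
    ((adjMat src dst).det ≠ 0 ↔ ∃ P : Equiv.Perm E, IsDisjointCycles src dst P) ∧
    ∀ P : Equiv.Perm E, IsDisjointCycles src dst P →
      (adjMat src dst).det =
        (-1 : ℂ) ^ (Fintype.card E - Nat.card (Quotient (sameCycleSetoid P))) := by
  refine ⟨⟨fun h => ?_, fun ⟨P, hP⟩ => ?_⟩, fun P hP => ?_⟩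
  · have hsrc : Injective src := by_contra fun hs => h (det_adjMat_eq_zero_of_not_injective hs)
    obtain ⟨σ, hσ⟩ := exists_perm_of_det_adjMat_ne_zero h
    exact ⟨σ, isDisjointCycles_of_injective hsrc hσ⟩
  · rw [hP.det_adjMat]
    exact Int.cast_ne_zero.mpr (Perm.sign P).ne_zero
  · rw [hP.det_adjMat, show sameCycleSetoid P = Perm.SameCycle.setoid P from rfl,
      Perm.sign_eq_neg_one_pow_card_sub_card_quotient]
    push_cast
    rfl

/-- For a finite digraph `G` without isolated vertices, the directed adjacency matrix `𝒜(G)` is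
non-singular iff `G` is a disjoint union of directed cycles, in which case
`det 𝒜(G) = (−1)^{α(G) − η(G)}` with `α` the number of cycles and `η` the number of edges. -/
theorem stmt17 {V E : Type} [Fintype V] [Fintype E] [DecidableEq V] [DecidableEq E]
    (src dst : E → V)
    (hni : ∀ v : V, (∃ e, src e = v) ∨ (∃ e, dst e = v)) :
    ((adjMat src dst).det ≠ 0 ↔ ∃ P : Equiv.Perm E, IsDisjointCycles src dst P) ∧
    ∀ P : Equiv.Perm E, IsDisjointCycles src dst P →
      (adjMat src dst).det =
        (-1 : ℂ) ^ (Fintype.card E - Nat.card (Quotient (sameCycleSetoid P))) :=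
  stmt17_general src dst
end

section
/- Let G be a finite digraph with n edges, with edge-adjacency matrix 𝒜(G) (entry (e,e′) = 1 iff head(e′) = tail(e)). Then the multivariate polynomial det(diag(x) − 𝒜(G)) in variables (x_e)_{e ∈ E} equals Σ_{C ∈ 𝒞(G)} (−1)^{α(C)} Π_{e ∉ E(C)} x_e, where 𝒞(G) is the set of subgraphs of G (including the empty subgraph) whose components are disjoint directed cycles, and α(C) is the number of cycles in C. -/
open scoped BigOperators

/-- `(S, P)` encodes a subgraph of `G` (edge set `S`) which is a disjoint collection of
directed cycles, together with its successor permutation `P`: `P` is the identity off `S`,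
follows the cycle structure on `S` (`dst e = src (P e)`), the vertices along each cycle are
pairwise distinct, and edges of `S` sharing a vertex lie on the same cycle. -/
def IsCycColl {V E : Type} (src dst : E → V) (S : Finset E) (P : Equiv.Perm E) : Prop :=
  (∀ e ∉ S, P e = e) ∧
  (∀ e ∈ S, P e ∈ S ∧ dst e = src (P e)) ∧
  (∀ e ∈ S, ∀ i j : ℕ, i < Function.minimalPeriod (⇑P) e → j < Function.minimalPeriod (⇑P) e →
    src ((⇑P)^[i] e) = src ((⇑P)^[j] e) → i = j) ∧
  (∀ e ∈ S, ∀ e' ∈ S, (src e = src e' ∨ src e = dst e' ∨ dst e = src e' ∨ dst e = dst e') →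
    P.SameCycle e e')

/-!
Expanding `det (diagonal x - 𝒜)` by the Leibniz formula and choosing, in each product, either
the diagonal or the `-𝒜` entry for every edge gives a sum over pairs `(S, P)`: `S` is the set of
edges where `-𝒜` was chosen. Such a pair contributes only if `P` fixes every edge off `S` and
`dst e = src (P e)` on `S`, i.e. `P` traces closed walks through `S`. If two edges of `S` have the
same source, composing `P` with their transposition changes the sign of the term and nothing
else, so such `S` contribute nothing in total. If `src` is injective on `S`, the closed walks are
vertex-disjoint cycles and `sign P * (-1) ^ #S = (-1) ^ (number of cycles)`.
-/

section Permutations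

open Finset

namespace Equiv.Perm

variable {α : Type}

theorem sameCycle_out_mk (P : Perm α) (a : α) :
    P.SameCycle a (Quotient.mk (sameCycleSetoid P) a).out :=
  Quotient.exact (s := sameCycleSetoid P) (Quotient.out_eq _).symm

theorem injOn_mk_fixedPoints (P : Perm α) :
    Set.InjOn (Quotient.mk (sameCycleSetoid P)) (Function.fixedPoints P) :=
  fun _ ha _ _ hab => (Quotient.exact hab).eq_of_left ha

variable [Fintype α] [DecidableEq α]

theorem support_subset_iff_forall_notMem {P : Perm α} {S : Finset α} :
    P.support ⊆ S ↔ ∀ a ∉ S, P a = a := by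
  simp only [Finset.subset_iff, mem_support]
  exact forall_congr' fun a => not_imp_comm

theorem SameCycle.mem_of_support_subset {P : Perm α} {S : Finset α} (hP : P.support ⊆ S)
    {a b : α} (hab : P.SameCycle a b) (ha : a ∈ S) : b ∈ S := by
  by_cases hsupp : a ∈ P.support
  · exact hP (hab.mem_support_iff.mp hsupp)
  · rwa [← hab.eq_of_left (notMem_support.mp hsupp)]

open Classical in
theorem card_image_mk_support (P : Perm α) :
    #(P.support.image (Quotient.mk (sameCycleSetoid P))) = #P.cycleFactorsFinset := by
  have hout : ∀ t ∈ P.support.image (Quotient.mk (sameCycleSetoid P)), t.out ∈ P.support := by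
    simp only [mem_image]
    rintro _ ⟨a, ha, rfl⟩
    exact (sameCycle_out_mk P a).mem_support_iff.mp ha
  apply card_bij (fun t _ => P.cycleOf t.out)
  · exact fun t ht => cycleOf_mem_cycleFactorsFinset_iff.mpr (hout t ht)
  · intro t ht t' ht' h
    rw [← Quotient.out_eq t, ← Quotient.out_eq t']
    exact Quotient.sound
      ((sameCycle_iff_cycleOf_eq_of_mem_support (hout t ht) (hout t' ht')).mpr h)
  · intro c hc
    obtain ⟨a, ha, rfl⟩ : ∃ a ∈ P.support, P.cycleOf a = c := by
      obtain ⟨a, ha⟩ := (mem_cycleFactorsFinset_iff.mp hc).1.nonempty_support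
      exact ⟨a, mem_cycleFactorsFinset_support_le hc ha, (cycle_is_cycleOf ha hc).symm⟩
    exact ⟨_, mem_image_of_mem _ ha, (sameCycle_out_mk P a).symm.cycleOf_eq⟩

theorem nat_card_classes_of_support_subset (P : Perm α) {S : Finset α} (hP : P.support ⊆ S) :
    Nat.card {t : Quotient (sameCycleSetoid P) // t.out ∈ S} =
      #P.cycleFactorsFinset + #(S \ P.support) := by
  classical
  let q := Quotient.mk (sameCycleSetoid P)
  have hmem : ∀ t, t.out ∈ S ↔ t ∈ S.image q := fun t =>
    ⟨fun h => mem_image.mpr ⟨t.out, h, Quotient.out_eq t⟩, by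
      intro h
      obtain ⟨a, ha, rfl⟩ := mem_image.mp h
      exact (sameCycle_out_mk P a).mem_of_support_subset hP ha⟩
  have hdisj : _root_.Disjoint (P.support.image q) ((S \ P.support).image q) := by
    rw [disjoint_left]
    rintro _ hta htb
    obtain ⟨a, ha, rfl⟩ := mem_image.mp hta
    obtain ⟨b, hb, hab⟩ := mem_image.mp htb
    exact (mem_sdiff.mp hb).2 ((Quotient.exact hab).mem_support_iff.mpr ha)
  have hunion : S.image q = P.support.image q ∪ (S \ P.support).image q := by
    rw [← image_union, union_sdiff_of_subset hP]
  rw [Nat.card_congr (Equiv.subtypeEquivRight hmem), Nat.card_eq_finsetCard, hunion,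
    card_union_of_disjoint hdisj, card_image_mk_support, card_image_of_injOn]
  exact (injOn_mk_fixedPoints P).mono fun a ha => notMem_support.mp (mem_sdiff.mp ha).2

theorem sign_mul_neg_one_pow_card (P : Perm α) {S : Finset α} (hP : P.support ⊆ S) :
    sign P * (-1) ^ #S = (-1) ^ Nat.card {t : Quotient (sameCycleSetoid P) // t.out ∈ S} := by
  rw [nat_card_classes_of_support_subset P hP, sign_of_cycleType, sum_cycleType, cycleType_def,
    Multiset.card_map, card_val, ← card_sdiff_add_card_eq_card hP, ← pow_add,
    show #P.support + #P.cycleFactorsFinset + (#(S \ P.support) + #P.support) =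
      #P.cycleFactorsFinset + #(S \ P.support) + 2 * #P.support by ring, pow_add, pow_mul]
  simp

end Equiv.Perm

end Permutations

section Expansion

open Equiv Equiv.Perm Matrix Finset

variable {E R : Type} [Fintype E] [DecidableEq E] [CommRing R]

noncomputable def expansionTerm (M : Matrix E E R) (x : E → R) (S : Finset E) (P : Perm E) : R :=
  ((sign P : ℤ) : R) * ((∏ e ∈ S, -M (P e) e) * ∏ e ∈ univ \ S, diagonal x (P e) e)

theorem det_diagonal_sub_eq_sum_expansionTerm (x : E → R) (M : Matrix E E R) :
    (diagonal x - M).det = ∑ S : Finset E, ∑ P : Perm E, expansionTerm M x S P := by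
  rw [det_apply', sum_comm]
  refine sum_congr rfl fun P _ => ?_
  simp only [expansionTerm, ← mul_sum, Matrix.sub_apply, sub_eq_neg_add, prod_add, powerset_univ]

end Expansion

section CycleCollections

open Equiv Equiv.Perm Matrix Finset Function

variable {V E : Type} {src dst : E → V}

theorem injOn_of_isCycColl [Finite E] {S : Finset E} {P : Perm E} (h : IsCycColl src dst S P) :
    Set.InjOn src S := by
  obtain ⟨-, -, hvert, hsame⟩ := h
  intro a ha b hb hab
  obtain ⟨n, rfl⟩ := (hsame a ha b hb (Or.inl hab)).exists_nat_pow_eq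
  have hT := minimalPeriod_pos_of_mem_periodicPts (P.injective.mem_periodicPts a)
  rw [← iterate_eq_pow, ← iterate_mod_minimalPeriod_eq] at hab ⊢
  rw [hvert a ha _ 0 (Nat.mod_lt _ hT) hT hab.symm, iterate_zero_apply]

variable [Fintype E] [DecidableEq E]

/-- `P` runs through closed walks covering `S`; unlike in `IsCycColl`, vertices may repeat. -/
def IsSuccessorPerm (src dst : E → V) (S : Finset E) (P : Perm E) : Prop :=
  P.support ⊆ S ∧ ∀ e ∈ S, dst e = src (P e)

theorem isCycColl_of_injOn {S : Finset E} {P : Perm E} (hP : IsSuccessorPerm src dst S P)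
    (hinj : Set.InjOn src S) : IsCycColl src dst S P := by
  obtain ⟨hsupp, hnext⟩ := hP
  have hiter : ∀ e ∈ S, ∀ n, P^[n] e ∈ S := fun e he n =>
    (sameCycle_pow_right.mpr (SameCycle.refl P e)).mem_of_support_subset hsupp he
  refine ⟨support_subset_iff_forall_notMem.mp hsupp, fun e he => ⟨hiter e he 1, hnext e he⟩,
    fun e he i j hi hj hij => iterate_injOn_Iio_minimalPeriod hi hj
      (hinj (hiter e he i) (hiter e he j) hij), ?_⟩
  have hS : ∀ e ∈ S, P e ∈ S := fun e he => hiter e he 1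
  intro e he e' he' hshare
  rcases hshare with h | h | h | h
  · rw [hinj he he' h]
  · rw [hinj he (hS e' he') (h.trans (hnext e' he'))]
    exact sameCycle_apply_left.mpr (SameCycle.refl P e')
  · rw [← hinj (hS e he) he' ((hnext e he).symm.trans h)]
    exact sameCycle_apply_right.mpr (SameCycle.refl P e)
  · exact P.injective (hinj (hS e he) (hS e' he')
      ((hnext e he).symm.trans (h.trans (hnext e' he')))) ▸ SameCycle.refl P e

theorem isCycColl_iff {S : Finset E} {P : Perm E} :
    IsCycColl src dst S P ↔ IsSuccessorPerm src dst S P ∧ Set.InjOn src S :=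
  ⟨fun h => ⟨⟨support_subset_iff_forall_notMem.mpr h.1, fun e he => (h.2.1 e he).2⟩,
    injOn_of_isCycColl h⟩, fun h => isCycColl_of_injOn h.1 h.2⟩

end CycleCollections

section AdjacencyExpansion

open Equiv Equiv.Perm Matrix Finset

variable {V E : Type} [Fintype E] [DecidableEq V] [DecidableEq E] {src dst : E → V}
  {S : Finset E} (x : E → ℂ)

theorem expansionTerm_swap_mul {a b : E} (ha : a ∈ S) (hb : b ∈ S) (hab : a ≠ b)
    (hsrc : src a = src b) (P : Perm E) :
    expansionTerm (adjMat src dst) x S (swap a b * P) = -expansionTerm (adjMat src dst) x S P := by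
  have hsrc_swap : ∀ y, src (swap a b y) = src y := fun y => by
    rw [swap_apply_def]; split_ifs <;> simp_all
  have hadj : ∏ e ∈ S, -adjMat src dst ((swap a b * P) e) e =
      ∏ e ∈ S, -adjMat src dst (P e) e :=
    prod_congr rfl fun e _ => by simp only [Perm.mul_apply, adjMat, of_apply, hsrc_swap]
  have hdiag : ∏ e ∈ univ \ S, diagonal x ((swap a b * P) e) e =
      ∏ e ∈ univ \ S, diagonal x (P e) e := by
    refine prod_congr rfl fun e he => ?_
    have hswap_e : swap a b e = e := swap_apply_of_ne_of_ne
      (fun h => (mem_sdiff.mp he).2 (h ▸ ha)) (fun h => (mem_sdiff.mp he).2 (h ▸ hb))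
    by_cases hPe : P e = e
    · rw [Perm.mul_apply, hPe, hswap_e]
    · rw [diagonal_apply_ne _ hPe, diagonal_apply_ne]
      rwa [Perm.mul_apply, Ne, swap_apply_eq_iff, hswap_e]
  rw [expansionTerm, expansionTerm, hadj, hdiag, Perm.sign_mul, sign_swap hab]
  push_cast
  ring

theorem sum_expansionTerm_eq_zero_of_not_injOn (hS : ¬ Set.InjOn src S) :
    ∑ P : Perm E, expansionTerm (adjMat src dst) x S P = 0 := by
  obtain ⟨a, ha, b, hb, hsrc, hab⟩ : ∃ a ∈ S, ∃ b ∈ S, src a = src b ∧ a ≠ b := by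
    simpa [Set.InjOn] using hS
  have hsum := Equiv.sum_comp (Equiv.mulLeft (swap a b)) (expansionTerm (adjMat src dst) x S)
  simp only [coe_mulLeft, expansionTerm_swap_mul x ha hb hab hsrc, sum_neg_distrib] at hsum
  exact CharZero.eq_neg_self_iff.mp hsum.symm

theorem expansionTerm_eq_zero_of_not_isSuccessorPerm {P : Perm E}
    (h : ¬ IsSuccessorPerm src dst S P) : expansionTerm (adjMat src dst) x S P = 0 := by
  rw [IsSuccessorPerm, support_subset_iff_forall_notMem, not_and_or] at h
  push Not at h
  rcases h with ⟨e, he, hPe⟩ | ⟨e, he, hdst⟩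
  · rw [expansionTerm, prod_eq_zero (f := fun e => diagonal x (P e) e)
      (mem_sdiff.mpr ⟨mem_univ e, he⟩) (diagonal_apply_ne x hPe)]
    ring
  · rw [expansionTerm,
      prod_eq_zero (f := fun e => -adjMat src dst (P e) e) he (by simp [adjMat, hdst])]
    ring

theorem expansionTerm_of_isSuccessorPerm {P : Perm E} (h : IsSuccessorPerm src dst S P) :
    expansionTerm (adjMat src dst) x S P =
      ((sign P : ℤ) : ℂ) * (-1) ^ #S * ∏ e ∈ univ \ S, x e := by
  have hadj : ∏ e ∈ S, -adjMat src dst (P e) e = (-1) ^ #S := by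
    rw [← prod_const]
    exact prod_congr rfl fun e he => by simp [adjMat, h.2 e he]
  have hdiag : ∏ e ∈ univ \ S, diagonal x (P e) e = ∏ e ∈ univ \ S, x e :=
    prod_congr rfl fun e he => by
      rw [support_subset_iff_forall_notMem.mp h.1 e (mem_sdiff.mp he).2, diagonal_apply_eq]
  rw [expansionTerm, hadj, hdiag, mul_assoc]

open Classical in
theorem sum_expansionTerm_eq_sum_ite_isCycColl :
    ∑ P : Perm E, expansionTerm (adjMat src dst) x S P =
      ∑ P : Perm E,
        if IsCycColl src dst S P then expansionTerm (adjMat src dst) x S P else 0 := by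
  by_cases hS : Set.InjOn src S
  · refine sum_congr rfl fun P _ => ?_
    split_ifs with h
    · rfl
    · exact expansionTerm_eq_zero_of_not_isSuccessorPerm x fun hP => h (isCycColl_of_injOn hP hS)
  · rw [sum_expansionTerm_eq_zero_of_not_injOn x hS,
      sum_eq_zero fun P _ => if_neg fun h => hS (injOn_of_isCycColl h)]

end AdjacencyExpansion

attribute [local instance] Classical.propDecidable

theorem det_diagonal_sub_adjMat_eq_sum_isCycColl {V E : Type} [Fintype E] [DecidableEq V]
    [DecidableEq E] (src dst : E → V) (x : E → ℂ) :
    (Matrix.diagonal x - adjMat src dst).det =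
      ∑ C : {SP : Finset E × Equiv.Perm E // IsCycColl src dst SP.1 SP.2},
        expansionTerm (adjMat src dst) x C.val.1 C.val.2 := by
  rw [det_diagonal_sub_eq_sum_expansionTerm,
    Finset.sum_congr rfl fun S _ => sum_expansionTerm_eq_sum_ite_isCycColl x,
    ← Fintype.sum_prod_type', ← Finset.sum_filter]
  exact Finset.sum_subtype _ (by simp) _

theorem stmt18_general {V E : Type} [Fintype E] [DecidableEq V] [DecidableEq E]
    (src dst : E → V) (x : E → ℂ) :
    (Matrix.diagonal x - adjMat src dst).det =
      ∑ C : {SP : Finset E × Equiv.Perm E // IsCycColl src dst SP.1 SP.2},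
        (-1 : ℂ) ^
            (Nat.card {t : Quotient (sameCycleSetoid C.val.2) // Quotient.out t ∈ C.val.1}) *
          ∏ e ∈ Finset.univ \ C.val.1, x e := by
  rw [det_diagonal_sub_adjMat_eq_sum_isCycColl]
  refine Finset.sum_congr rfl fun C _ => ?_
  have hP := (isCycColl_iff.mp C.2).1
  have hsign :=
    congrArg (fun u : ℤˣ => ((u : ℤ) : ℂ)) (Equiv.Perm.sign_mul_neg_one_pow_card _ hP.1)
  push_cast at hsign
  rw [expansionTerm_of_isSuccessorPerm x hP, hsign]

/-- The multivariate characteristic polynomial of the directed adjacency matrix: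
`det(diag(x) − 𝒜(G)) = Σ_{C ∈ 𝒞(G)} (−1)^{α(C)} Π_{e ∉ E(C)} x_e`, summing over all disjoint
collections of directed cycles `C` in `G` (including the empty one), where `α(C)` is the
number of cycles of `C`. -/
theorem stmt18 {V E : Type} [Fintype V] [Fintype E] [DecidableEq V] [DecidableEq E]
    (src dst : E → V) (x : E → ℂ) :
    (Matrix.diagonal x - adjMat src dst).det =
      ∑ C : {SP : Finset E × Equiv.Perm E // IsCycColl src dst SP.1 SP.2},
        (-1 : ℂ) ^
            (Nat.card {t : Quotient (sameCycleSetoid C.val.2) // Quotient.out t ∈ C.val.1}) *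
          ∏ e ∈ Finset.univ \ C.val.1, x e :=
  stmt18_general src dst x
end
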